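/- Let G be an n-sun (n ≥ 3) whose inner vertices induce a cycle: the vertex set is U ∪ W with U = {u_1, …, u_n} inducing the cycle C_n (u_i adjacent to u_{i+1}, indices modulo n), W = {w_1, …, w_n} an independent set, and w_i adjacent exactly to the two consecutive cycle vertices u_i and u_{i+1} (indices modulo n). Then for every integer r with 1 ≤ r < ⌊n/2⌋, the clique number of the r-th power is ω(G^r) = 2r + 1; and for every integer r ≥ ⌊n/2⌋ + 1, G^r is the complete graph on 2n vertices, so ω(G^r) = 2n. -/

import Mathlib

/-- The `r`-th power of a simple graph `G`: two distinct vertices are adjacent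
iff their distance in `G` is at most `r` (in particular they are connected in `G`). -/
def SimpleGraph.power {V : Type*} (G : SimpleGraph V) (r : ℕ) : SimpleGraph V :=
  SimpleGraph.fromRel (fun u v => G.Reachable u v ∧ G.dist u v ≤ r)

/-- The `n`-sun whose inner vertices induce a cycle: the inner vertices
`Sum.inl i` form the cycle `C_n` (`u_i` adjacent to `u_{i+1}`, indices mod `n`),
the outer vertices `Sum.inr i` form an independent set, and the outer vertex
`w_i` is adjacent exactly to `u_i` and `u_{i+1}`. -/
def cycleSunGraph (n : ℕ) : SimpleGraph (ZMod n ⊕ ZMod n) :=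
  SimpleGraph.fromRel (fun a b =>
    match a, b with
    | Sum.inl i, Sum.inl j => j = i + 1
    | Sum.inr i, Sum.inl j => j = i ∨ j = i + 1
    | _, _ => False)


/-!
Draw the sun on the cycle `C_{2n}`, putting `u_i` at position `2i` and `w_i` at `2i + 1`,
between its two neighbours `u_i` and `u_{i+1}`. Adjacent vertices land at circular distance at most
`2`, so a clique of `G^r` lands on a set of positions with pairwise circular distance at most
`2r`; when `2r < n` such a set has at most `2r + 1` elements, since reducing offsets from one of
its points modulo `2r + 1` is injective. The `2r + 1` vertices `u_0, …, u_r, w_0, …, w_{r-1}`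
form a clique of `G^r`. Finally walking around the shorter side of the cycle shows that the
diameter of the sun is at most `⌊n/2⌋ + 1`.
-/

open SimpleGraph Finset Sum

namespace ZMod

variable {m : ℕ}

lemma natAbs_valMinAbs_natCast_le [NeZero m] (k : ℕ) : (k : ZMod m).valMinAbs.natAbs ≤ k := by
  rw [valMinAbs_natAbs_eq_min, val_natCast]
  exact (min_le_left _ _).trans (Nat.mod_le _ _)

lemma natAbs_valMinAbs_sub_le (x y z : ZMod m) :
    (x - z).valMinAbs.natAbs ≤ (x - y).valMinAbs.natAbs + (y - z).valMinAbs.natAbs :=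
  calc (x - z).valMinAbs.natAbs = ((x - y) + (y - z)).valMinAbs.natAbs := by
        rw [sub_add_sub_cancel]
    _ ≤ _ := (natAbs_valMinAbs_add_le _ _).trans (Int.natAbs_add_le _ _)

lemma exists_le_half_eq_add_or_eq_add [NeZero m] (x y : ZMod m) :
    ∃ k : ℕ, k ≤ m / 2 ∧ (y = x + k ∨ x = y + k) := by
  refine ⟨(y - x).valMinAbs.natAbs, natAbs_valMinAbs_le _, ?_⟩
  rcases (y - x).valMinAbs.natAbs_eq with h | h
  · left
    rw [← Int.cast_natCast, ← h, coe_valMinAbs, add_sub_cancel]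
  · right
    rw [← Int.cast_natCast, ← neg_eq_iff_eq_neg.2 h, Int.cast_neg, coe_valMinAbs]
    ring

lemma card_le_of_pairwise_natAbs_valMinAbs_sub_le {t : ℕ} (hm : 2 * t + 1 < m)
    {S : Finset (ZMod m)}
    (hS : (S : Set (ZMod m)).Pairwise fun x y => (x - y).valMinAbs.natAbs ≤ t) :
    #S ≤ t + 1 := by
  have : NeZero m := ⟨by omega⟩
  rcases S.eq_empty_or_nonempty with rfl | ⟨x₀, hx₀⟩
  · simp
  have hoff : ∀ x ∈ S, |(x - x₀).valMinAbs| ≤ t := fun x hx => by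
    rcases eq_or_ne x x₀ with rfl | hne
    · simp
    · rw [Int.abs_eq_natAbs]
      exact_mod_cast hS hx hx₀ hne
  have hgap : ∀ x ∈ S, ∀ y ∈ S, x - y ≠ ((t + 1 : ℕ) : ZMod m) := by
    intro x hx y hy hxy
    have hfar : (x - y).valMinAbs.natAbs = t + 1 := by
      rw [hxy, valMinAbs_natCast_of_le_half (by omega), Int.natAbs_natCast]
    have hne : x ≠ y := by
      rintro rfl
      simp at hfar
    have := hS hx hy hne
    omega
  -- offsets from `x₀` lie in `[-t, t]`, so two of them congruent modulo `t + 1` are equal or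
  -- differ by `± (t + 1)`, which `hgap` rules out
  have hinj : Set.InjOn (fun x => ((x - x₀).valMinAbs : ZMod (t + 1))) S := by
    intro x hx y hy hxy
    obtain ⟨c, hc⟩ := (intCast_eq_intCast_iff_dvd_sub _ _ _).1 hxy
    have hd : y - x = ((t + 1 : ℕ) : ZMod m) * c := by
      rw [← Int.cast_natCast, ← Int.cast_mul, ← hc]
      simp only [Int.cast_sub, coe_valMinAbs]
      ring
    obtain ⟨hxl, hxu⟩ := abs_le.1 (hoff x hx)
    obtain ⟨hyl, hyu⟩ := abs_le.1 (hoff y hy)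
    push_cast at hc
    have : -2 < c := by nlinarith
    have : c < 2 := by nlinarith
    obtain rfl | rfl | rfl : c = -1 ∨ c = 0 ∨ c = 1 := by omega
    · exact absurd (by rw [← neg_sub, hd]; simp) (hgap x hx y hy)
    · exact (sub_eq_zero.1 (by simpa using hd)).symm
    · exact absurd (by simpa using hd) (hgap y hy x hx)
  calc #S ≤ #(univ : Finset (ZMod (t + 1))) :=
        card_le_card_of_injOn _ (fun _ _ => mem_coe.2 (mem_univ _)) hinj
    _ = t + 1 := by simp

end ZMod

namespace SimpleGraph

variable {α : Type*} {G : SimpleGraph α}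

lemma cliqueNum_eq_of_isNClique [Finite α] {k : ℕ} {s : Finset α} (hs : G.IsNClique k s)
    (h : ∀ t : Finset α, G.IsClique (t : Set α) → #t ≤ k) : G.cliqueNum = k := by
  obtain ⟨t, ht⟩ := G.exists_isNClique_cliqueNum
  exact le_antisymm (ht.card_eq ▸ h t ht.isClique) (hs.card_eq ▸ hs.isClique.card_le_cliqueNum)

lemma cliqueNum_top [Fintype α] : (⊤ : SimpleGraph α).cliqueNum = Fintype.card α :=
  cliqueNum_eq_of_isNClique ⟨by simp, card_univ⟩ fun t _ => card_le_univ t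

lemma Walk.natAbs_valMinAbs_sub_le_mul_length {m c : ℕ} {f : α → ZMod m}
    (hf : ∀ a b, G.Adj a b → (f a - f b).valMinAbs.natAbs ≤ c) {a b : α} (p : G.Walk a b) :
    (f a - f b).valMinAbs.natAbs ≤ c * p.length := by
  induction p with
  | nil => simp
  | cons h p ih =>
    rw [Walk.length_cons, mul_add_one, add_comm]
    exact (ZMod.natAbs_valMinAbs_sub_le _ _ _).trans (add_le_add (hf _ _ h) ih)

lemma Connected.natAbs_valMinAbs_sub_le_mul_dist (hG : G.Connected) {m c : ℕ} {f : α → ZMod m}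
    (hf : ∀ a b, G.Adj a b → (f a - f b).valMinAbs.natAbs ≤ c) (a b : α) :
    (f a - f b).valMinAbs.natAbs ≤ c * G.dist a b := by
  obtain ⟨p, hp⟩ := hG.exists_walk_length_eq_dist a b
  exact hp ▸ p.natAbs_valMinAbs_sub_le_mul_length hf

lemma Adj.dist_le_dist_add_one {u v w : α} (h : G.Adj v w) : G.dist u w ≤ G.dist u v + 1 := by
  simpa [dist_eq_one_iff_adj.2 h] using h.reachable.dist_triangle_right u

lemma Connected.power_adj (hG : G.Connected) {r : ℕ} {a b : α} :
    (G.power r).Adj a b ↔ a ≠ b ∧ G.dist a b ≤ r := by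
  simp [power, hG.preconnected a b, dist_comm (u := b)]

lemma Connected.isClique_power_iff (hG : G.Connected) {r : ℕ} {s : Set α} :
    (G.power r).IsClique s ↔ s.Pairwise fun a b => G.dist a b ≤ r := by
  simp only [isClique_iff, Set.Pairwise, hG.power_adj]
  exact forall₄_congr fun a _ b _ => ⟨fun h hne => (h hne).2, fun h hne => ⟨hne, h hne⟩⟩

lemma Connected.power_eq_top (hG : G.Connected) {r : ℕ} (h : ∀ a b, G.dist a b ≤ r) :
    G.power r = ⊤ := by
  ext a b
  simp [hG.power_adj, h]

end SimpleGraph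

section CycleSun

variable {n : ℕ}

lemma cycleSunGraph_adj_inr_inl (i : ZMod n) : (cycleSunGraph n).Adj (inr i) (inl i) := by
  simp [cycleSunGraph]

lemma cycleSunGraph_adj_inr_inl_add_one (i : ZMod n) :
    (cycleSunGraph n).Adj (inr i) (inl (i + 1)) := by
  simp [cycleSunGraph]

def sunPos (n : ℕ) : ZMod n ⊕ ZMod n → ZMod (2 * n) :=
  Sum.elim (fun i => ((2 * i.val : ℕ) : ZMod (2 * n)))
    (fun i => ((2 * i.val + 1 : ℕ) : ZMod (2 * n)))

lemma sunPos_inr (i : ZMod n) : sunPos n (inr i) = sunPos n (inl i) + 1 := by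
  simp [sunPos]

lemma sunPos_inl_add_one [NeZero n] (i : ZMod n) :
    sunPos n (inl (i + 1)) = sunPos n (inl i) + 2 := by
  have hval : (i + 1).val = (i.val + 1) % n := by
    rw [ZMod.val_add, ZMod.val_one_eq_one_mod, Nat.add_mod_mod]
  simp only [sunPos, Sum.elim_inl]
  rw [hval, ← Nat.mul_mod_mul_left, ZMod.natCast_mod]
  push_cast
  ring

lemma sunPos_injective [NeZero n] : Function.Injective (sunPos n) := by
  have hinj := CharP.natCast_injOn_Iio (ZMod (2 * n)) (2 * n)
  rintro (i | i) (j | j) h <;> have hi := i.val_lt <;> have hj := j.val_lt <;>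
    have hval := hinj (by simp only [Set.mem_Iio]; omega) (by simp only [Set.mem_Iio]; omega) h
  · exact congrArg inl (ZMod.val_injective n (by omega))
  · omega
  · omega
  · exact congrArg inr (ZMod.val_injective n (by omega))

lemma natAbs_valMinAbs_sunPos_sub_le_two [NeZero n] {a b : ZMod n ⊕ ZMod n}
    (h : (cycleSunGraph n).Adj a b) : (sunPos n a - sunPos n b).valMinAbs.natAbs ≤ 2 := by
  have h1 : (1 : ZMod (2 * n)).valMinAbs.natAbs ≤ 2 := by
    simpa using (ZMod.natAbs_valMinAbs_natCast_le (m := 2 * n) 1).trans one_le_two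
  have h2 : (2 : ZMod (2 * n)).valMinAbs.natAbs ≤ 2 := by
    simpa using ZMod.natAbs_valMinAbs_natCast_le (m := 2 * n) 2
  have h12 : (1 : ZMod (2 * n)) - 2 = -1 := by ring
  have h21 : (2 : ZMod (2 * n)) - 1 = 1 := by ring
  obtain ⟨-, hab⟩ := (fromRel_adj _ _ _).1 h
  rcases a with i | i <;> rcases b with j | j <;> simp only [or_false, false_or] at hab
  all_goals rcases hab with rfl | rfl <;> simp [sunPos_inr, sunPos_inl_add_one, h1, h2, h12, h21]

def sunArc (n r : ℕ) : Finset (ZMod n ⊕ ZMod n) :=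
  ((range (r + 1)).image Nat.cast).disjSum ((range r).image Nat.cast)

lemma card_sunArc {r : ℕ} (hr : r < n) : #(sunArc n r) = 2 * r + 1 := by
  have hinj := CharP.natCast_injOn_Iio (ZMod n) n
  rw [sunArc, card_disjSum, card_image_of_injOn (hinj.mono ?_),
    card_image_of_injOn (hinj.mono ?_), card_range, card_range]
  · ring
  all_goals
    intro x hx
    simp only [coe_range, Set.mem_Iio] at hx ⊢
    omega

end CycleSun

section CycleSunDist

variable {n : ℕ} [Fact (1 < n)]

lemma cycleSunGraph_adj_inl_add_one (i : ZMod n) :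
    (cycleSunGraph n).Adj (inl i) (inl (i + 1)) := by
  simp [cycleSunGraph]

lemma cycleSunGraph_exists_walk_inl (i : ZMod n) (k : ℕ) :
    ∃ p : (cycleSunGraph n).Walk (inl i) (inl (i + k)), p.length = k := by
  induction k generalizing i with
  | zero => exact ⟨Walk.nil.copy rfl (by rw [Nat.cast_zero, add_zero]), by simp⟩
  | succ k ih =>
    obtain ⟨p, hp⟩ := ih (i + 1)
    have hend : i + 1 + (k : ZMod n) = i + (k + 1 : ℕ) := by
      push_cast
      ring
    exact ⟨(Walk.cons (cycleSunGraph_adj_inl_add_one i) p).copy rfl (by rw [hend]),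
      by simp [hp]⟩

lemma cycleSunGraph_connected : (cycleSunGraph n).Connected := by
  have hu : ∀ i : ZMod n, (cycleSunGraph n).Reachable (inl 0) (inl i) := fun i => by
    obtain ⟨p, -⟩ := cycleSunGraph_exists_walk_inl (0 : ZMod n) i.val
    simpa using p.reachable
  refine (connected_iff_exists_forall_reachable _).2 ⟨inl 0, ?_⟩
  rintro (i | i)
  · exact hu i
  · exact (hu i).trans (cycleSunGraph_adj_inr_inl i).symm.reachable

lemma cycleSunGraph_dist_inl_inl_add_le (i : ZMod n) (k : ℕ) :
    (cycleSunGraph n).dist (inl i) (inl (i + k)) ≤ k := by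
  obtain ⟨p, hp⟩ := cycleSunGraph_exists_walk_inl i k
  exact (dist_le p).trans_eq hp

lemma cycleSunGraph_dist_inl_inr_add_le (i : ZMod n) (k : ℕ) :
    (cycleSunGraph n).dist (inl i) (inr (i + k)) ≤ k + 1 :=
  (cycleSunGraph_adj_inr_inl _).symm.dist_le_dist_add_one.trans
    (Nat.add_le_add_right (cycleSunGraph_dist_inl_inl_add_le i k) 1)

lemma cycleSunGraph_dist_inr_inl_add_le (i : ZMod n) (k : ℕ) :
    (cycleSunGraph n).dist (inr i) (inl (i + k + 1)) ≤ k + 1 := by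
  rw [add_right_comm, SimpleGraph.dist_comm]
  exact (cycleSunGraph_adj_inr_inl_add_one i).symm.dist_le_dist_add_one.trans
    (Nat.add_le_add_right (dist_comm.trans_le (cycleSunGraph_dist_inl_inl_add_le _ k)) 1)

lemma cycleSunGraph_dist_inr_inr_add_le (i : ZMod n) (k : ℕ) :
    (cycleSunGraph n).dist (inr i) (inr (i + k + 1)) ≤ k + 2 :=
  (cycleSunGraph_adj_inr_inl _).symm.dist_le_dist_add_one.trans
    (Nat.add_le_add_right (cycleSunGraph_dist_inr_inl_add_le i k) 1)

lemma cycleSunGraph_dist_inl_inl_le (i j : ZMod n) :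
    (cycleSunGraph n).dist (inl i) (inl j) ≤ n / 2 := by
  obtain ⟨k, hk, rfl | rfl⟩ := ZMod.exists_le_half_eq_add_or_eq_add i j
  · exact (cycleSunGraph_dist_inl_inl_add_le i k).trans hk
  · exact dist_comm.trans_le ((cycleSunGraph_dist_inl_inl_add_le j k).trans hk)

lemma cycleSunGraph_dist_inl_inr_le (i j : ZMod n) :
    (cycleSunGraph n).dist (inl i) (inr j) ≤ n / 2 + 1 := by
  obtain ⟨k, hk, rfl | h⟩ := ZMod.exists_le_half_eq_add_or_eq_add i j
  · exact (cycleSunGraph_dist_inl_inr_add_le i k).trans (by omega)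
  rcases k with _ | k
  · simpa [h] using (cycleSunGraph_dist_inl_inr_add_le j 0).trans (by omega : 0 + 1 ≤ n / 2 + 1)
  · rw [h, Nat.cast_succ, ← add_assoc, SimpleGraph.dist_comm]
    exact (cycleSunGraph_dist_inr_inl_add_le j k).trans (by omega)

lemma cycleSunGraph_dist_inr_inr_le (i j : ZMod n) :
    (cycleSunGraph n).dist (inr i) (inr j) ≤ n / 2 + 1 := by
  obtain ⟨k, hk, h | h⟩ := ZMod.exists_le_half_eq_add_or_eq_add i j <;> rcases k with _ | k
  · simp [h]
  · rw [h, Nat.cast_succ, ← add_assoc]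
    exact (cycleSunGraph_dist_inr_inr_add_le i k).trans (by omega)
  · simp [h]
  · rw [h, Nat.cast_succ, ← add_assoc, SimpleGraph.dist_comm]
    exact (cycleSunGraph_dist_inr_inr_add_le j k).trans (by omega)

lemma cycleSunGraph_dist_le (a b : ZMod n ⊕ ZMod n) :
    (cycleSunGraph n).dist a b ≤ n / 2 + 1 := by
  rcases a with i | i <;> rcases b with j | j
  · exact (cycleSunGraph_dist_inl_inl_le i j).trans (Nat.le_succ _)
  · exact cycleSunGraph_dist_inl_inr_le i j
  · exact dist_comm.trans_le (cycleSunGraph_dist_inl_inr_le j i)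
  · exact cycleSunGraph_dist_inr_inr_le i j

lemma cycleSunGraph_power_eq_top {r : ℕ} (hr : n / 2 + 1 ≤ r) :
    (cycleSunGraph n).power r = ⊤ :=
  cycleSunGraph_connected.power_eq_top fun a b => (cycleSunGraph_dist_le a b).trans hr

lemma card_le_of_isClique_power_cycleSunGraph {r : ℕ} (hr : 2 * r < n)
    {t : Finset (ZMod n ⊕ ZMod n)} (ht : ((cycleSunGraph n).power r).IsClique (t : Set _)) :
    #t ≤ 2 * r + 1 := by
  rw [cycleSunGraph_connected.isClique_power_iff] at ht
  rw [← card_image_of_injective t sunPos_injective]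
  refine ZMod.card_le_of_pairwise_natAbs_valMinAbs_sub_le (by omega) ?_
  rw [coe_image]
  rintro _ ⟨a, ha, rfl⟩ _ ⟨b, hb, rfl⟩ hne
  calc _ ≤ 2 * (cycleSunGraph n).dist a b :=
        cycleSunGraph_connected.natAbs_valMinAbs_sub_le_mul_dist
          (fun _ _ => natAbs_valMinAbs_sunPos_sub_le_two) a b
    _ ≤ 2 * r := by
        gcongr
        exact ht ha hb fun h => hne (h ▸ rfl)

lemma cycleSunGraph_dist_le_of_mem_sunArc {r : ℕ} {a b : ZMod n ⊕ ZMod n}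
    (ha : a ∈ sunArc n r) (hb : b ∈ sunArc n r) : (cycleSunGraph n).dist a b ≤ r := by
  have hUU {x y : ℕ} (hxy : x ≤ y) (hy : y ≤ r) :
      (cycleSunGraph n).dist (inl (x : ZMod n)) (inl (y : ZMod n)) ≤ r := by
    obtain ⟨k, rfl⟩ := Nat.exists_eq_add_of_le hxy
    push_cast
    exact (cycleSunGraph_dist_inl_inl_add_le _ _).trans (by omega)
  have hUW {x y : ℕ} (hx : x ≤ r) (hy : y < r) :
      (cycleSunGraph n).dist (inl (x : ZMod n)) (inr (y : ZMod n)) ≤ r := by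
    rcases le_or_gt x y with hxy | hxy
    · obtain ⟨k, rfl⟩ := Nat.exists_eq_add_of_le hxy
      push_cast
      exact (cycleSunGraph_dist_inl_inr_add_le _ _).trans (by omega)
    · obtain ⟨k, rfl⟩ := Nat.exists_eq_add_of_lt hxy
      push_cast
      rw [dist_comm]
      exact (cycleSunGraph_dist_inr_inl_add_le _ _).trans (by omega)
  have hWW {x y : ℕ} (hxy : x < y) (hy : y < r) :
      (cycleSunGraph n).dist (inr (x : ZMod n)) (inr (y : ZMod n)) ≤ r := by
    obtain ⟨k, rfl⟩ := Nat.exists_eq_add_of_lt hxy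
    push_cast
    exact (cycleSunGraph_dist_inr_inr_add_le _ _).trans (by omega)
  simp only [sunArc] at ha hb
  rcases a with x | x <;> rcases b with y | y <;>
    simp only [inl_mem_disjSum, inr_mem_disjSum, mem_image, mem_range] at ha hb <;>
    obtain ⟨x, hx, rfl⟩ := ha <;> obtain ⟨y, hy, rfl⟩ := hb
  · rcases le_total x y with hxy | hxy
    · exact hUU hxy (by omega)
    · exact dist_comm.trans_le (hUU hxy (by omega))
  · exact hUW (by omega) hy
  · exact dist_comm.trans_le (hUW (by omega) hx)
  · rcases lt_trichotomy x y with hxy | rfl | hxy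
    · exact hWW hxy hy
    · simp
    · exact dist_comm.trans_le (hWW hxy hx)

lemma isNClique_power_sunArc {r : ℕ} (hr : r < n) :
    ((cycleSunGraph n).power r).IsNClique (2 * r + 1) (sunArc n r) :=
  ⟨cycleSunGraph_connected.isClique_power_iff.2 fun _ ha _ hb _ =>
    cycleSunGraph_dist_le_of_mem_sunArc ha hb, card_sunArc hr⟩

end CycleSunDist

/-- For the `n`-sun `G` (`n ≥ 3`) whose inner vertices induce a cycle:
for `1 ≤ r < ⌊n/2⌋` the clique number of `G^r` is `2r + 1`, and for every
`r ≥ ⌊n/2⌋ + 1` the power `G^r` is the complete graph on the `2n` vertices,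
so its clique number is `2n`. -/
theorem cliqueNum_power_cycleSunGraph (n : ℕ) (hn : 3 ≤ n) :
    (∀ r : ℕ, 1 ≤ r → r < n / 2 →
        ((cycleSunGraph n).power r).cliqueNum = 2 * r + 1) ∧
      (∀ r : ℕ, n / 2 + 1 ≤ r →
        (cycleSunGraph n).power r = ⊤ ∧ ((cycleSunGraph n).power r).cliqueNum = 2 * n) := by
  have : Fact (1 < n) := ⟨by omega⟩
  refine ⟨fun r _ hr => ?_, fun r hr => ?_⟩
  · exact cliqueNum_eq_of_isNClique (isNClique_power_sunArc (by omega))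
      fun t ht => card_le_of_isClique_power_cycleSunGraph (by omega) ht
  · have htop := cycleSunGraph_power_eq_top hr
    refine ⟨htop, ?_⟩
    rw [htop, cliqueNum_top, Fintype.card_sum, ZMod.card]
    ring
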